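/- arXiv:1112.1739 — 4 statements merged into one kernel-verified Lean document; each statement's English description precedes it below -/
import Mathlib

section
/- Let φ : ℝ³ → ℝ be differentiable, η : ℝ² → ℝ differentiable, q(x,t) = φ(x, η(x,t), t), and fix (x,t). Write φ_x, φ_z, φ_t for partial derivatives of φ at (x, η(x,t), t) and η_x, η_t, q_x, q_t for the partial derivatives of η and q at (x,t). If the kinematic condition η_t + η_x·φ_x = φ_z and the dynamic condition φ_t + (1/2)(φ_x² + φ_z²) + g·η(x,t) = 0 both hold at this point, then q_t + (1/2)q_x² + g·η − (1/2)(η_t + q_x η_x)²/(1 + η_x²) = 0. -/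
/-!
By the chain rule the surface trace `q = φ(x, η, t)` has derivatives `q_x = φ_x + η_x φ_z` and
`q_t = φ_t + η_t φ_z`. The kinematic condition turns `η_t + q_x η_x` into `φ_z (1 + η_x²)`, so the
last term equals `½ φ_z² (1 + η_x²)`, and what remains is the dynamic condition plus `φ_z` times
the kinematic one.
-/

section SurfaceTrace

variable {𝕜 : Type*} [NontriviallyNormedField 𝕜]
  {E₁ E₂ F G : Type*} [NormedAddCommGroup E₁] [NormedSpace 𝕜 E₁]
  [NormedAddCommGroup E₂] [NormedSpace 𝕜 E₂] [NormedAddCommGroup F] [NormedSpace 𝕜 F]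
  [NormedAddCommGroup G] [NormedSpace 𝕜 G]

theorem fderiv_surfaceTrace_apply {φ : E₁ × F × E₂ → G} {η : E₁ × E₂ → F} {p : E₁ × E₂}
    (hφ : DifferentiableAt 𝕜 φ (p.1, η p, p.2)) (hη : DifferentiableAt 𝕜 η p) (v : E₁ × E₂) :
    fderiv 𝕜 (fun p => φ (p.1, η p, p.2)) p v =
      fderiv 𝕜 φ (p.1, η p, p.2) (v.1, fderiv 𝕜 η p v, v.2) := by
  have hgraph : HasFDerivAt (fun p : E₁ × E₂ => (p.1, η p, p.2))
      ((ContinuousLinearMap.fst 𝕜 E₁ E₂).prod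
        ((fderiv 𝕜 η p).prod (ContinuousLinearMap.snd 𝕜 E₁ E₂))) p :=
    hasFDerivAt_fst.prodMk (hη.hasFDerivAt.prodMk hasFDerivAt_snd)
  exact congrArg (· v) (hφ.hasFDerivAt.comp p hgraph).fderiv

end SurfaceTrace

theorem ContinuousLinearMap.apply_prod_prod {R M : Type*} [Semiring R] [TopologicalSpace R]
    [AddCommMonoid M] [TopologicalSpace M] [Module R M] (L : R × R × R →L[R] M) (a b c : R) :
    L (a, b, c) = a • L (1, 0, 0) + b • L (0, 1, 0) + c • L (0, 0, 1) := by
  have hsplit : ((a, b, c) : R × R × R) = a • (1, 0, 0) + b • (0, 1, 0) + c • (0, 0, 1) := by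
    simp
  rw [hsplit, map_add, map_add, map_smul, map_smul, map_smul]

theorem surface_bernoulli_of_chain_rule (g η₀ φx φz φt ηx ηt : ℝ)
    (hkin : ηt + ηx * φx = φz)
    (hdyn : φt + (1 / 2) * (φx ^ 2 + φz ^ 2) + g * η₀ = 0) :
    (φt + ηt * φz) + (1 / 2) * (φx + ηx * φz) ^ 2 + g * η₀
      - (1 / 2) * (ηt + (φx + ηx * φz) * ηx) ^ 2 / (1 + ηx ^ 2) = 0 := by
  have hnum : ηt + (φx + ηx * φz) * ηx = φz * (1 + ηx ^ 2) := by
    rw [← hkin]; ring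
  have hden : (1 : ℝ) + ηx ^ 2 ≠ 0 := by positivity
  rw [hnum, mul_pow, pow_two (1 + ηx ^ 2), ← mul_assoc, mul_div_assoc, mul_div_cancel_right₀ _ hden]
  linear_combination hdyn + φz * hkin

/-- The Bernoulli equation at the free surface expressed purely in terms of surface
variables (the Zakharov/Craig–Sulem surface formulation). -/
theorem surface_bernoulli_equation
    (g : ℝ) (φ : ℝ × ℝ × ℝ → ℝ) (η : ℝ × ℝ → ℝ)
    (hφ : Differentiable ℝ φ) (hη : Differentiable ℝ η)
    (x t : ℝ)
    (q : ℝ × ℝ → ℝ) (hqdef : q = fun p => φ (p.1, η p, p.2))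
    (φx φz φt ηx ηt qx qt : ℝ)
    (hφx : φx = fderiv ℝ φ (x, η (x, t), t) (1, 0, 0))
    (hφz : φz = fderiv ℝ φ (x, η (x, t), t) (0, 1, 0))
    (hφt : φt = fderiv ℝ φ (x, η (x, t), t) (0, 0, 1))
    (hηx : ηx = fderiv ℝ η (x, t) (1, 0))
    (hηt : ηt = fderiv ℝ η (x, t) (0, 1))
    (hqx : qx = fderiv ℝ q (x, t) (1, 0))
    (hqt : qt = fderiv ℝ q (x, t) (0, 1))
    (hkin : ηt + ηx * φx = φz)
    (hdyn : φt + (1 / 2) * (φx ^ 2 + φz ^ 2) + g * η (x, t) = 0) :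
    qt + (1 / 2) * qx ^ 2 + g * η (x, t)
      - (1 / 2) * (ηt + qx * ηx) ^ 2 / (1 + ηx ^ 2) = 0 := by
  have hq (v : ℝ × ℝ) : fderiv ℝ q (x, t) v =
      fderiv ℝ φ (x, η (x, t), t) (v.1, fderiv ℝ η (x, t) v, v.2) := by
    subst hqdef
    exact fderiv_surfaceTrace_apply (hφ _) (hη _) v
  have hqx' : qx = φx + ηx * φz := by
    rw [hqx, hq, ← hηx, ContinuousLinearMap.apply_prod_prod, hφx, hφz]
    simp only [smul_eq_mul]; ring
  have hqt' : qt = φt + ηt * φz := by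
    rw [hqt, hq, ← hηt, ContinuousLinearMap.apply_prod_prod, hφt, hφz]
    simp only [smul_eq_mul]; ring
  rw [hqx', hqt']
  exact surface_bernoulli_of_chain_rule g _ φx φz φt ηx ηt hkin hdyn
end

section
/- Let c > 0, M > 0 and 0 ≤ S₀ < c²/2 be real, and let p : ℂ → ℂ be analytic on the open strip S_M = {z ∈ ℂ : |Im z| < M} with |p(z)| ≤ S₀ for all z ∈ S_M. Then the function z ↦ c − √(c² − 2p(z)) is analytic on S_M, and there exists a constant C > 0, depending only on c and S₀, such that for every y with |y| < M, ∫_ℝ |c − √(c² − 2p(x+iy))|² dx ≤ C² ∫_ℝ |p(x+iy)|² dx. -/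
/-!
With `s = √(a² - q)` on the principal branch, `(a - s)(a + s) = q` and `Re s ≥ 0`, so
`‖a + s‖ ≥ a` and hence `‖a - √(a² - q)‖ ≤ ‖q‖ / a` for every `q`. With `a = c` and `q = 2p`
this gives the pointwise bound `‖c - √(c² - 2p)‖ ≤ (2/c) ‖p‖`, which integrates to the
`L²` bound with `C = 2/c`. Analyticity holds because `‖2p‖ < c²` keeps `c² - 2p` in the
right half-plane, away from the branch cut.
-/

open MeasureTheory Complex

lemma Complex.re_cpow_one_half_nonneg (w : ℂ) : 0 ≤ (w ^ ((1 : ℂ) / 2)).re := by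
  rw [one_div, cpow_inv_two_re]
  exact Real.sqrt_nonneg _

lemma Complex.cpow_one_half_mul_self (w : ℂ) : w ^ ((1 : ℂ) / 2) * w ^ ((1 : ℂ) / 2) = w := by
  rw [← sq, one_div]
  exact cpow_ofNat_inv_pow w 2

lemma Complex.norm_sub_cpow_one_half_le {a : ℝ} (ha : 0 < a) (q : ℂ) :
    ‖(a : ℂ) - ((a : ℂ) ^ 2 - q) ^ ((1 : ℂ) / 2)‖ ≤ ‖q‖ / a := by
  set s := ((a : ℂ) ^ 2 - q) ^ ((1 : ℂ) / 2)
  have hfactor : ((a : ℂ) - s) * ((a : ℂ) + s) = q := by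
    linear_combination (-1 : ℂ) * cpow_one_half_mul_self ((a : ℂ) ^ 2 - q)
  have ha_le : a ≤ ‖(a : ℂ) + s‖ :=
    calc a ≤ ((a : ℂ) + s).re := by
          rw [add_re, ofReal_re]; linarith [re_cpow_one_half_nonneg ((a : ℂ) ^ 2 - q)]
      _ ≤ ‖(a : ℂ) + s‖ := re_le_norm _
  rw [le_div_iff₀ ha, ← hfactor, norm_mul]
  exact mul_le_mul_of_nonneg_left ha_le (norm_nonneg _)

lemma Complex.sub_mem_slitPlane_of_norm_lt_re {w q : ℂ} (h : ‖q‖ < w.re) :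
    w - q ∈ slitPlane :=
  Or.inl (by rw [sub_re]; linarith [re_le_norm q])

lemma MeasureTheory.lintegral_ofReal_norm_sq_le_of_norm_le {α E F : Type*} [MeasurableSpace α]
    {μ : Measure α} [NormedAddCommGroup E] [NormedAddCommGroup F] {f : α → E} {g : α → F}
    {K : ℝ} (hfg : ∀ x, ‖f x‖ ≤ K * ‖g x‖) :
    ∫⁻ x, ENNReal.ofReal (‖f x‖ ^ 2) ∂μ ≤
      ENNReal.ofReal (K ^ 2) * ∫⁻ x, ENNReal.ofReal (‖g x‖ ^ 2) ∂μ := by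
  rw [← lintegral_const_mul' _ _ ENNReal.ofReal_ne_top]
  refine lintegral_mono fun x => ?_
  rw [← ENNReal.ofReal_mul (sq_nonneg K), ← mul_pow]
  exact ENNReal.ofReal_le_ofReal (pow_le_pow_left₀ (norm_nonneg _) (hfg x) 2)

theorem sqrt_composition_analytic_and_L2_bound_general
    (c S₀ : ℝ) (hc : 0 < c) (hS : S₀ < c ^ 2 / 2) :
    ∃ C : ℝ, 0 < C ∧
      ∀ (M : ℝ), 0 < M → ∀ p : ℂ → ℂ,
        DifferentiableOn ℂ p {z : ℂ | |z.im| < M} →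
        (∀ z ∈ {z : ℂ | |z.im| < M}, ‖p z‖ ≤ S₀) →
        DifferentiableOn ℂ
            (fun z : ℂ => (c : ℂ) - ((c : ℂ) ^ 2 - 2 * p z) ^ ((1 : ℂ) / 2))
            {z : ℂ | |z.im| < M} ∧
          ∀ y : ℝ, |y| < M →
            (∫⁻ x : ℝ, ENNReal.ofReal
                (‖(c : ℂ) - ((c : ℂ) ^ 2
                  - 2 * p (x + y * Complex.I)) ^ ((1 : ℂ) / 2)‖ ^ 2))
              ≤ ENNReal.ofReal (C ^ 2) *
                ∫⁻ x : ℝ, ENNReal.ofReal (‖p (x + y * Complex.I)‖ ^ 2) := by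
  refine ⟨2 / c, by positivity, fun M _ p hp hbound => ⟨?_, fun y _ => ?_⟩⟩
  · have hslit : ∀ z ∈ {z : ℂ | |z.im| < M}, (c : ℂ) ^ 2 - 2 * p z ∈ slitPlane := by
      intro z hz
      refine sub_mem_slitPlane_of_norm_lt_re ?_
      have := hbound z hz
      simp only [norm_mul, Complex.norm_ofNat, ← ofReal_pow, ofReal_re]
      linarith
    exact (differentiableOn_const _).sub
      (((differentiableOn_const _).sub (hp.const_mul 2)).cpow (differentiableOn_const _) hslit)
  · refine lintegral_ofReal_norm_sq_le_of_norm_le fun x => ?_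
    calc _ ≤ ‖2 * p (x + y * I)‖ / c := norm_sub_cpow_one_half_le hc _
      _ = 2 / c * ‖p (x + y * I)‖ := by rw [norm_mul, Complex.norm_ofNat]; ring

/-- If `p` is analytic and bounded by `S₀ < c²/2` on a horizontal strip, then
`c - √(c² - 2p)` is analytic on the strip, and its squared modulus integrated along any
horizontal line in the strip is controlled by that of `p`, with a constant depending
only on `c` and `S₀`. -/
theorem sqrt_composition_analytic_and_L2_bound
    (c S₀ : ℝ) (hc : 0 < c) (hS₀ : 0 ≤ S₀) (hS : S₀ < c ^ 2 / 2) :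
    ∃ C : ℝ, 0 < C ∧
      ∀ (M : ℝ), 0 < M → ∀ p : ℂ → ℂ,
        DifferentiableOn ℂ p {z : ℂ | |z.im| < M} →
        (∀ z ∈ {z : ℂ | |z.im| < M}, ‖p z‖ ≤ S₀) →
        DifferentiableOn ℂ
            (fun z : ℂ => (c : ℂ) - ((c : ℂ) ^ 2 - 2 * p z) ^ ((1 : ℂ) / 2))
            {z : ℂ | |z.im| < M} ∧
          ∀ y : ℝ, |y| < M →
            (∫⁻ x : ℝ, ENNReal.ofReal
                (‖(c : ℂ) - ((c : ℂ) ^ 2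
                  - 2 * p (x + y * Complex.I)) ^ ((1 : ℂ) / 2)‖ ^ 2))
              ≤ ENNReal.ofReal (C ^ 2) *
                ∫⁻ x : ℝ, ENNReal.ofReal (‖p (x + y * Complex.I)‖ ^ 2) :=
  sqrt_composition_analytic_and_L2_bound_general c S₀ hc hS
end

section
/- Let M > 0 and define H_M to be the set of functions p : ℂ → ℂ analytic on the open strip S_M = {z ∈ ℂ : |Im z| < M} with ‖p‖_{H_M} = sup_{|y| < M} (∫_ℝ (1+|x|²)|p(x+iy)|² dx)^{1/2} < ∞. If (f_n) is a sequence in H_M that is Cauchy with respect to ‖·‖_{H_M} (i.e. for every ε > 0 there exists N such that ‖f_n − f_m‖_{H_M} ≤ ε for all n, m ≥ N), then there exists f ∈ H_M, analytic on S_M with ‖f‖_{H_M} < ∞, such that ‖f_n − f‖_{H_M} → 0 as n → ∞. -/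
/-!
By the mean value property, `|p c|²` is at most the mean of `|p|²` over every circle around `c`,
hence over the disc `ball c r`; by Tonelli the disc integral is at most `2 r` times the supremum
of the line integrals `∫ |p (x + i y)|² dx`. So `π r |p c|² ≤ 2 ‖p‖²_{H_M}` whenever the disc lies
in the strip, and an `H_M`-Cauchy sequence is uniformly Cauchy on compact subsets of the strip.
Its locally uniform limit `g` is holomorphic, and Fatou's lemma on each horizontal line gives
`‖f n - g‖_{H_M} → 0`.
-/

open MeasureTheory Complex

/-- The `H_M` norm: the supremum over horizontal lines `Im z = y`, `|y| < M`, of the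
weighted `L²` norm `(∫ (1+|x|²)|p(x+iy)|² dx)^{1/2}`, valued in `[0,∞]`. -/
noncomputable def HMnorm (M : ℝ) (p : ℂ → ℂ) : ENNReal :=
  ⨆ (y : ℝ) (_ : |y| < M),
    (∫⁻ x : ℝ, ENNReal.ofReal
        ((1 + |x| ^ 2) * ‖p (x + y * Complex.I)‖ ^ 2)) ^ ((1 : ℝ) / 2)

open Filter Metric Set Topology
open scoped ENNReal Real

def strip (M : ℝ) : Set ℂ := {z | |z.im| < M}

theorem isOpen_strip (M : ℝ) : IsOpen (strip M) :=
  isOpen_lt (continuous_abs.comp continuous_im) continuous_const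

theorem ofReal_add_mul_I_mem_strip {M y : ℝ} (hy : |y| < M) (x : ℝ) :
    (x + y * I : ℂ) ∈ strip M := by
  simpa [strip] using hy

noncomputable def weightedLine (p : ℂ → ℂ) (y x : ℝ) : ℂ := (√(1 + |x| ^ 2) : ℂ) * p (x + y * I)

theorem enorm_weightedLine_rpow_two (p : ℂ → ℂ) (y x : ℝ) :
    ‖weightedLine p y x‖ₑ ^ (2 : ℝ) = ENNReal.ofReal ((1 + |x| ^ 2) * ‖p (x + y * I)‖ ^ 2) := by
  rw [weightedLine, ← ofReal_norm, ENNReal.ofReal_rpow_of_nonneg (norm_nonneg _) two_pos.le,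
    Real.rpow_two, norm_mul, norm_real, Real.norm_of_nonneg (Real.sqrt_nonneg _), mul_pow,
    Real.sq_sqrt (by positivity)]

theorem HMnorm_eq_iSup_eLpNorm (M : ℝ) (p : ℂ → ℂ) :
    HMnorm M p = ⨆ (y : ℝ) (_ : |y| < M), eLpNorm (weightedLine p y) 2 volume := by
  simp only [HMnorm, eLpNorm_eq_lintegral_rpow_enorm_toReal two_ne_zero ENNReal.ofNat_ne_top,
    ENNReal.toReal_ofNat, enorm_weightedLine_rpow_two]

theorem eLpNorm_weightedLine_le_HMnorm {M y : ℝ} (p : ℂ → ℂ) (hy : |y| < M) :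
    eLpNorm (weightedLine p y) 2 volume ≤ HMnorm M p := by
  rw [HMnorm_eq_iSup_eLpNorm]
  exact le_iSup₂ (f := fun y (_ : |y| < M) => eLpNorm (weightedLine p y) 2 volume) y hy

theorem continuous_weightedLine {M y : ℝ} {p : ℂ → ℂ} (hp : ContinuousOn p (strip M))
    (hy : |y| < M) : Continuous (weightedLine p y) := by
  have hline : Continuous fun x : ℝ => p (x + y * I) :=
    hp.comp_continuous (by fun_prop) (ofReal_add_mul_I_mem_strip hy)
  exact (continuous_ofReal.comp (by fun_prop)).mul hline

theorem HMnorm_sub_le {M : ℝ} {p q : ℂ → ℂ} (hp : ContinuousOn p (strip M))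
    (hq : ContinuousOn q (strip M)) :
    HMnorm M (fun z => p z - q z) ≤ HMnorm M p + HMnorm M q := by
  rw [HMnorm_eq_iSup_eLpNorm]
  refine iSup₂_le fun y hy => ?_
  have hsub : weightedLine (fun z => p z - q z) y = weightedLine p y - weightedLine q y := by
    ext x; simp [weightedLine, mul_sub]
  rw [hsub]
  exact (eLpNorm_sub_le (continuous_weightedLine hp hy).aestronglyMeasurable
    (continuous_weightedLine hq hy).aestronglyMeasurable (by norm_num)).trans
    (add_le_add (eLpNorm_weightedLine_le_HMnorm p hy) (eLpNorm_weightedLine_le_HMnorm q hy))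

theorem HMnorm_le_of_tendsto {M : ℝ} {q : ℕ → ℂ → ℂ} {r : ℂ → ℂ} {C : ℝ≥0∞}
    (hq : ∀ n, ContinuousOn (q n) (strip M))
    (hlim : ∀ z ∈ strip M, Tendsto (fun n => q n z) atTop (𝓝 (r z)))
    (hbound : ∀ᶠ n in atTop, HMnorm M (q n) ≤ C) : HMnorm M r ≤ C := by
  rw [HMnorm_eq_iSup_eLpNorm]
  refine iSup₂_le fun y hy => ?_
  refine (Lp.eLpNorm_lim_le_liminf_eLpNorm
    (fun n => (continuous_weightedLine (hq n) hy).aestronglyMeasurable) _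
    (ae_of_all _ fun x => ?_)).trans (liminf_le_of_frequently_le' ?_)
  · exact (hlim _ (ofReal_add_mul_I_mem_strip hy x)).const_mul _
  · exact (hbound.mono fun n hn => (eLpNorm_weightedLine_le_HMnorm _ hy).trans hn).frequently

theorem ofReal_two_pi_mul_enorm_sq_le_lintegral_circle {p : ℂ → ℂ} {c : ℂ} {s : ℝ}
    (hp : DifferentiableOn ℂ p (closedBall c |s|)) :
    ENNReal.ofReal (2 * π) * ‖p c‖ₑ ^ 2 ≤ ∫⁻ θ in Ioo (-π) π, ‖p (circleMap c s θ)‖ₑ ^ 2 := by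
  set F : ℝ → ℂ := fun θ => p (circleMap c s θ) ^ 2
  have hmean : Real.circleAverage (fun z => p z ^ 2) c s = p c ^ 2 :=
    ((hp.pow 2).diffContOnCl_ball subset_rfl).circleAverage
  have hperiodic : Function.Periodic F (2 * π) := fun θ => by simp [F, periodic_circleMap c s θ]
  have hintegral : ∫ θ in (-π)..π, F θ = (2 * π : ℝ) • p c ^ 2 := by
    have := hperiodic.intervalIntegral_add_eq (-π) 0
    rw [← hmean, Real.circleAverage_def, smul_inv_smul₀ (by positivity)]
    simpa only [zero_add, neg_add_cancel_left, show -π + 2 * π = π by ring] using this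
  calc ENNReal.ofReal (2 * π) * ‖p c‖ₑ ^ 2 = ‖∫ θ in Ioc (-π) π, F θ‖ₑ := by
        rw [← intervalIntegral.integral_of_le (by linarith [Real.pi_pos]), hintegral, enorm_smul,
          enorm_pow, Real.enorm_eq_ofReal (by positivity)]
    _ ≤ ∫⁻ θ in Ioc (-π) π, ‖F θ‖ₑ := enorm_integral_le_lintegral_enorm _
    _ = ∫⁻ θ in Ioo (-π) π, ‖p (circleMap c s θ)‖ₑ ^ 2 := by
        simp only [F, enorm_pow, setLIntegral_congr Ioo_ae_eq_Ioc]

theorem setLIntegral_ofReal_Ioo_zero {r : ℝ} (hr : 0 ≤ r) :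
    ∫⁻ s in Ioo 0 r, ENNReal.ofReal s = ENNReal.ofReal (r ^ 2 / 2) := by
  have hint : IntegrableOn (fun s : ℝ => s) (Ioo 0 r) :=
    continuous_id.integrableOn_Icc.mono_set Ioo_subset_Icc_self
  rw [← ofReal_integral_eq_lintegral_ofReal hint
      ((ae_restrict_mem measurableSet_Ioo).mono fun s hs => hs.1.le),
    ← integral_Ioc_eq_integral_Ioo, ← intervalIntegral.integral_of_le hr, integral_id]
  ring_nf

theorem add_polarCoord_symm_eq_circleMap (c : ℂ) (q : ℝ × ℝ) :
    c + Complex.polarCoord.symm q = circleMap c q.1 q.2 := by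
  simp [circleMap, Complex.exp_mul_I, ← ofReal_cos, ← ofReal_sin]

theorem ofReal_pi_mul_sq_mul_enorm_sq_le_setLIntegral_ball {p : ℂ → ℂ} {c : ℂ} {r : ℝ}
    (hr : 0 ≤ r) (hp : DifferentiableOn ℂ p (ball c r)) :
    ENNReal.ofReal (π * r ^ 2) * ‖p c‖ₑ ^ 2 ≤ ∫⁻ z in ball c r, ‖p z‖ₑ ^ 2 := by
  set G : ℂ → ℝ≥0∞ := (ball c r).indicator fun z => ‖p z‖ₑ ^ 2
  set R : Set (ℝ × ℝ) := Ioo 0 r ×ˢ Ioo (-π) π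
  have hR : ∀ q ∈ R, circleMap c q.1 q.2 ∈ ball c r := fun q hq => by
    rw [mem_ball, dist_eq_norm, circleMap_sub_center, norm_circleMap_zero, abs_of_pos hq.1.1]
    exact hq.1.2
  have hmeas : AEMeasurable (fun q : ℝ × ℝ => ENNReal.ofReal q.1 * ‖p (circleMap c q.1 q.2)‖ₑ ^ 2)
      ((volume.prod volume).restrict R) := by
    have : ContinuousOn (fun q : ℝ × ℝ => p (circleMap c q.1 q.2)) R :=
      hp.continuousOn.comp (by fun_prop) hR
    exact (ENNReal.measurable_ofReal.comp measurable_fst).aemeasurable.mul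
      ((this.enorm.aemeasurable (measurableSet_Ioo.prod measurableSet_Ioo)).pow_const 2)
  calc ENNReal.ofReal (π * r ^ 2) * ‖p c‖ₑ ^ 2
      = ∫⁻ s in Ioo 0 r, ENNReal.ofReal s * (ENNReal.ofReal (2 * π) * ‖p c‖ₑ ^ 2) := by
        rw [lintegral_mul_const _ ENNReal.measurable_ofReal, setLIntegral_ofReal_Ioo_zero hr,
          ← mul_assoc, ← ENNReal.ofReal_mul (by positivity)]
        ring_nf
    _ ≤ ∫⁻ s in Ioo 0 r, ∫⁻ θ in Ioo (-π) π,
          ENNReal.ofReal s * ‖p (circleMap c s θ)‖ₑ ^ 2 := by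
        refine setLIntegral_mono' measurableSet_Ioo fun s hs => ?_
        rw [lintegral_const_mul' _ _ ENNReal.ofReal_ne_top]
        exact mul_le_mul_right (ofReal_two_pi_mul_enorm_sq_le_lintegral_circle
          (hp.mono (closedBall_subset_ball (abs_lt.2 ⟨by linarith [hs.1], hs.2⟩)))) _
    _ = ∫⁻ q in R, ENNReal.ofReal q.1 * ‖p (circleMap c q.1 q.2)‖ₑ ^ 2 :=
        (setLIntegral_prod _ hmeas).symm
    _ = ∫⁻ q in R, ENNReal.ofReal q.1 • G (c + Complex.polarCoord.symm q) := by
        refine setLIntegral_congr_fun (measurableSet_Ioo.prod measurableSet_Ioo) fun q hq => ?_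
        rw [smul_eq_mul, add_polarCoord_symm_eq_circleMap]
        simp only [G, indicator_of_mem (hR q hq)]
    _ ≤ ∫⁻ q in polarCoord.target, ENNReal.ofReal q.1 • G (c + Complex.polarCoord.symm q) :=
        lintegral_mono_set <| by
          rw [polarCoord_target]; exact prod_mono Ioo_subset_Ioi_self subset_rfl
    _ = ∫⁻ z in ball c r, ‖p z‖ₑ ^ 2 := by
        rw [Complex.lintegral_comp_polarCoord_symm (fun z => G (c + z)),
          lintegral_add_left_eq_self G c, lintegral_indicator measurableSet_ball]

theorem lintegral_le_lintegral_lintegral_ofReal_add_mul_I (F : ℂ → ℝ≥0∞) :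
    ∫⁻ z, F z ≤ ∫⁻ y : ℝ, ∫⁻ x : ℝ, F (x + y * I) := by
  rw [← (volume_preserving_equiv_real_prod.symm).lintegral_comp_emb
      measurableEquivRealProd.symm.measurableEmbedding, Measure.volume_eq_prod,
    ← lintegral_prod_swap]
  refine (lintegral_prod_le _).trans_eq ?_
  simp [measurableEquivRealProd_symm_apply, mk_eq_add_mul_I]

theorem lintegral_enorm_sq_le_HMnorm_sq {M y : ℝ} (p : ℂ → ℂ) (hy : |y| < M) :
    ∫⁻ x : ℝ, ‖p (x + y * I)‖ₑ ^ 2 ≤ HMnorm M p ^ 2 := by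
  set L := ∫⁻ x : ℝ, ENNReal.ofReal ((1 + |x| ^ 2) * ‖p (x + y * I)‖ ^ 2)
  have hL : L ^ ((1 : ℝ) / 2) ≤ HMnorm M p :=
    le_iSup₂ (f := fun y (_ : |y| < M) =>
      (∫⁻ x : ℝ, ENNReal.ofReal ((1 + |x| ^ 2) * ‖p (x + y * I)‖ ^ 2)) ^ ((1 : ℝ) / 2)) y hy
  calc ∫⁻ x : ℝ, ‖p (x + y * I)‖ₑ ^ 2 ≤ L := by
        refine lintegral_mono fun x => ?_
        rw [← ofReal_norm, ← ENNReal.ofReal_pow (norm_nonneg _)]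
        exact ENNReal.ofReal_le_ofReal
          (le_mul_of_one_le_left (by positivity) (le_add_of_nonneg_right (by positivity)))
    _ = (L ^ ((1 : ℝ) / 2)) ^ 2 := by
        rw [← ENNReal.rpow_natCast, ← ENNReal.rpow_mul]
        norm_num
    _ ≤ HMnorm M p ^ 2 := by gcongr

theorem setLIntegral_ball_le_HMnorm_sq {M r : ℝ} {p : ℂ → ℂ} {c : ℂ}
    (hball : ball c r ⊆ strip M) :
    ∫⁻ z in ball c r, ‖p z‖ₑ ^ 2 ≤ ENNReal.ofReal (2 * r) * HMnorm M p ^ 2 := by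
  set B := Ioo (c.im - r) (c.im + r)
  have hline : ∀ y : ℝ, ∫⁻ x : ℝ, (ball c r).indicator (fun z => ‖p z‖ₑ ^ 2) (x + y * I)
      ≤ B.indicator (fun _ => HMnorm M p ^ 2) y := by
    intro y
    by_cases hy : y ∈ B
    · have hyM : |y| < M := by
        have hdiff : (c.re + y * I : ℂ) - c = ((y - c.im : ℝ) : ℂ) * I := by
          apply Complex.ext <;> simp
        have : (c.re + y * I : ℂ) ∈ ball c r := by
          rw [mem_ball, dist_eq_norm, hdiff, norm_mul, norm_I, mul_one, norm_real,
            Real.norm_eq_abs, abs_sub_lt_iff]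
          constructor <;> linarith [hy.1, hy.2]
        simpa [strip] using hball this
      rw [indicator_of_mem hy]
      exact (lintegral_mono fun x => indicator_le_self _ _ _).trans
        (lintegral_enorm_sq_le_HMnorm_sq p hyM)
    · have hzero : ∀ x : ℝ, (x + y * I : ℂ) ∉ ball c r := fun x hx => hy <| by
        have := (abs_im_le_norm (x + y * I - c)).trans_lt (mem_ball_iff_norm.1 hx)
        simp only [sub_im, add_im, ofReal_im, mul_im, ofReal_re, I_im, mul_one, I_re,
          mul_zero, add_zero, zero_add, abs_sub_lt_iff] at this
        exact ⟨by linarith, by linarith⟩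
      simp [indicator_of_notMem (hzero _)]
  calc ∫⁻ z in ball c r, ‖p z‖ₑ ^ 2
      = ∫⁻ z, (ball c r).indicator (fun z => ‖p z‖ₑ ^ 2) z :=
        (lintegral_indicator measurableSet_ball _).symm
    _ ≤ ∫⁻ y : ℝ, B.indicator (fun _ => HMnorm M p ^ 2) y :=
        (lintegral_le_lintegral_lintegral_ofReal_add_mul_I _).trans (lintegral_mono hline)
    _ = ENNReal.ofReal (2 * r) * HMnorm M p ^ 2 := by
        rw [lintegral_indicator measurableSet_Ioo, setLIntegral_const, Real.volume_Ioo, mul_comm]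
        ring_nf

theorem pi_mul_mul_sq_norm_le_of_HMnorm_le {M r ε : ℝ} {p : ℂ → ℂ} {c : ℂ} (hr : 0 < r) (hε : 0 ≤ ε)
    (hp : DifferentiableOn ℂ p (ball c r)) (hball : ball c r ⊆ strip M)
    (hHM : HMnorm M p ≤ ENNReal.ofReal ε) :
    π * r * ‖p c‖ ^ 2 ≤ 2 * ε ^ 2 := by
  have key : ENNReal.ofReal (π * r ^ 2) * ‖p c‖ₑ ^ 2 ≤ ENNReal.ofReal (2 * r) * HMnorm M p ^ 2 :=
    (ofReal_pi_mul_sq_mul_enorm_sq_le_setLIntegral_ball hr.le hp).trans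
      (setLIntegral_ball_le_HMnorm_sq hball)
  have hreal : π * r ^ 2 * ‖p c‖ ^ 2 ≤ 2 * r * ε ^ 2 := by
    rw [← ofReal_norm, ← ENNReal.ofReal_pow (norm_nonneg _),
      ← ENNReal.ofReal_mul (by positivity)] at key
    refine (ENNReal.ofReal_le_ofReal_iff (by positivity)).1 (key.trans ?_)
    rw [ENNReal.ofReal_mul (by positivity : 0 ≤ 2 * r), ENNReal.ofReal_pow hε]
    gcongr
  nlinarith

theorem uniformCauchySeqOn_of_HMnorm_cauchy {M : ℝ} {f : ℕ → ℂ → ℂ}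
    (hanal : ∀ n, DifferentiableOn ℂ (f n) (strip M))
    (hcauchy : ∀ ε : ℝ, 0 < ε → ∃ N : ℕ, ∀ n m : ℕ, N ≤ n → N ≤ m →
      HMnorm M (fun z => f n z - f m z) ≤ ENNReal.ofReal ε)
    {K : Set ℂ} (hK : IsCompact K) (hKS : K ⊆ strip M) : UniformCauchySeqOn f atTop K := by
  obtain ⟨δ, hδ, hKδ⟩ := hK.exists_cthickening_subset_open (isOpen_strip M) hKS
  have hball : ∀ z ∈ K, ball z δ ⊆ strip M := fun z hz =>
    (ball_subset_closedBall.trans (closedBall_subset_cthickening hz δ)).trans hKδ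
  rw [Metric.uniformCauchySeqOn_iff]
  intro ε hε
  obtain ⟨N, hN⟩ := hcauchy (ε * √(π * δ) / 2) (by positivity)
  refine ⟨N, fun m hm n hn z hz => ?_⟩
  have hbound := pi_mul_mul_sq_norm_le_of_HMnorm_le hδ (by positivity)
    (((hanal m).sub (hanal n)).mono (hball z hz)) (hball z hz) (hN m n hm hn)
  rw [div_pow, mul_pow, Real.sq_sqrt (by positivity), Pi.sub_apply] at hbound
  have hπδ : 0 < π * δ := by positivity
  have hsq : ‖f m z - f n z‖ ^ 2 < ε ^ 2 := by nlinarith [mul_pos hπδ (pow_pos hε 2)]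
  rw [dist_eq_norm]
  exact lt_of_pow_lt_pow_left₀ 2 hε.le hsq

theorem exists_tendstoLocallyUniformlyOn_of_uniformCauchySeqOn {α β ι : Type*}
    [TopologicalSpace α] [LocallyCompactSpace α] [UniformSpace β] [CompleteSpace β] [Nonempty β]
    [Nonempty ι] [SemilatticeSup ι] {f : ι → α → β} {U : Set α} (hU : IsOpen U)
    (h : ∀ K ⊆ U, IsCompact K → UniformCauchySeqOn f atTop K) :
    ∃ g : α → β, TendstoLocallyUniformlyOn f g atTop U := by
  have hpt : ∀ x ∈ U, Tendsto (fun n => f n x) atTop (𝓝 (limUnder atTop fun n => f n x)) :=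
    fun x hx =>
      ((h {x} (singleton_subset_iff.2 hx) isCompact_singleton).cauchySeq rfl).tendsto_limUnder
  refine ⟨fun x => limUnder atTop fun n => f n x,
    (tendstoLocallyUniformlyOn_iff_forall_isCompact hU).2 fun K hKU hK => ?_⟩
  exact (h K hKU hK).tendstoUniformlyOn_of_tendsto fun x hx => hpt x (hKU hx)

theorem HM_complete_general (M : ℝ) (f : ℕ → ℂ → ℂ)
    (hanal : ∀ n, DifferentiableOn ℂ (f n) {z : ℂ | |z.im| < M})
    (hfin : ∀ n, HMnorm M (f n) < ⊤)
    (hcauchy : ∀ ε : ℝ, 0 < ε → ∃ N : ℕ, ∀ n m : ℕ, N ≤ n → N ≤ m →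
      HMnorm M (fun z => f n z - f m z) ≤ ENNReal.ofReal ε) :
    ∃ g : ℂ → ℂ, DifferentiableOn ℂ g {z : ℂ | |z.im| < M} ∧ HMnorm M g < ⊤ ∧
      Filter.Tendsto (fun n => HMnorm M (fun z => f n z - g z))
        Filter.atTop (nhds 0) := by
  obtain ⟨g, hfg⟩ := exists_tendstoLocallyUniformlyOn_of_uniformCauchySeqOn (isOpen_strip M)
    fun K hKS hK => uniformCauchySeqOn_of_HMnorm_cauchy hanal hcauchy hK hKS
  have hg : DifferentiableOn ℂ g (strip M) :=
    hfg.differentiableOn (Eventually.of_forall hanal) (isOpen_strip M)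
  have hconv : ∀ ε : ℝ, 0 < ε → ∀ᶠ n in atTop,
      HMnorm M (fun z => f n z - g z) ≤ ENNReal.ofReal ε := by
    intro ε hε
    obtain ⟨N, hN⟩ := hcauchy ε hε
    filter_upwards [eventually_ge_atTop N] with n hn
    exact HMnorm_le_of_tendsto (q := fun m z => f n z - f m z)
      (fun m => ((hanal n).sub (hanal m)).continuousOn)
      (fun z hz => tendsto_const_nhds.sub (hfg.tendsto_at hz))
      ((eventually_ge_atTop N).mono fun m hm => hN n m hn hm)
  refine ⟨g, hg, ?_, ?_⟩
  · obtain ⟨N, hN⟩ := (hconv 1 one_pos).exists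
    calc HMnorm M g = HMnorm M (fun z => f N z - (f N z - g z)) := by simp
      _ ≤ HMnorm M (f N) + HMnorm M (fun z => f N z - g z) :=
        HMnorm_sub_le (hanal N).continuousOn ((hanal N).sub hg).continuousOn
      _ < ⊤ := ENNReal.add_lt_top.2 ⟨hfin N, hN.trans_lt ENNReal.ofReal_lt_top⟩
  · refine ENNReal.tendsto_nhds_zero.2 fun ε hε => ?_
    obtain ⟨δ, -, hδpos, hδε⟩ := ENNReal.lt_iff_exists_real_btwn.1 hε
    exact (hconv δ (ENNReal.ofReal_pos.1 hδpos)).mono fun n hn => hn.trans hδε.le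

/-- Completeness of the space `H_M` of functions analytic on the strip
`{|Im z| < M}` with finite weighted-`L²` norm along horizontal lines: every Cauchy
sequence converges in the `H_M` norm to an element of `H_M`. -/
theorem HM_complete (M : ℝ) (hM : 0 < M) (f : ℕ → ℂ → ℂ)
    (hanal : ∀ n, DifferentiableOn ℂ (f n) {z : ℂ | |z.im| < M})
    (hfin : ∀ n, HMnorm M (f n) < ⊤)
    (hcauchy : ∀ ε : ℝ, 0 < ε → ∃ N : ℕ, ∀ n m : ℕ, N ≤ n → N ≤ m →
      HMnorm M (fun z => f n z - f m z) ≤ ENNReal.ofReal ε) :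
    ∃ g : ℂ → ℂ, DifferentiableOn ℂ g {z : ℂ | |z.im| < M} ∧ HMnorm M g < ⊤ ∧
      Filter.Tendsto (fun n => HMnorm M (fun z => f n z - g z))
        Filter.atTop (nhds 0) :=
  HM_complete_general M f hanal hfin hcauchy
end

section
/- Let h > 0, M > 0 and let ĝ : ℝ → ℂ be measurable with ∫_ℝ e^{2M|k|}|ĝ(k)|² dk < ∞. Define, on the open set Ω = {(x,z) ∈ ℝ² : |z + h| < M}, the complex-valued functions F₁(x,z) = (1/2π)∫_ℝ e^{ikx} cosh(k(z+h)) ĝ(k) dk and F₂(x,z) = (−i/2π)∫_ℝ e^{ikx} sinh(k(z+h)) ĝ(k) dk. Then both integrals converge absolutely at every point of Ω, F₁ and F₂ are infinitely differentiable on Ω, and both satisfy Laplace's equation on Ω: ∂²F/∂x² + ∂²F/∂z² = 0. -/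
open MeasureTheory Complex

section Aux

open Set

lemma my_integrable_exp_neg_abs (b : ℝ) (hb : 0 < b) :
    Integrable (fun x : ℝ => Real.exp (-b * |x|)) := by
  have h2 : IntegrableOn (fun x : ℝ => Real.exp (-b * |x|)) (Ici 0) := by
    rw [integrableOn_Ici_iff_integrableOn_Ioi]
    apply (exp_neg_integrableOn_Ioi 0 hb).congr_fun ?_ measurableSet_Ioi
    intro x hx
    simp only [abs_of_pos (Set.mem_Ioi.mp hx)]
  have h3 : IntegrableOn (fun x : ℝ => Real.exp (-b * |x|)) (Iio 0) := by
    have key := (MeasurePreserving.integrableOn_comp_preimage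
      (Measure.measurePreserving_neg (volume : Measure ℝ))
      (MeasurableEquiv.neg ℝ).measurableEmbedding
      (f := fun x : ℝ => Real.exp (-b * |x|)) (s := Ici 0)).mpr h2
    have : (fun x : ℝ => Real.exp (-b * |x|)) ∘ (Neg.neg) = fun x : ℝ => Real.exp (-b * |x|) := by
      funext x; simp [Function.comp]
    rw [this] at key
    apply key.mono_set
    intro x hx
    simp only [mem_preimage, mem_Ici, mem_Iio] at *
    simpa using hx.le
  have := h3.union h2
  rwa [Iio_union_Ici, integrableOn_univ] at this

variable (M : ℝ) (ghat : ℝ → ℂ)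

lemma my_aux_integrable (hmeas : Measurable ghat)
    (hint : (∫⁻ k : ℝ,
        ENNReal.ofReal (Real.exp (2 * M * |k|) * ‖ghat k‖ ^ 2)) < ⊤)
    (m : ℝ) (hm : m < M) :
    Integrable (fun k : ℝ => Real.exp (m * |k|) * ‖ghat k‖) := by
  set f : ℝ → ℝ := fun k => Real.exp ((m - M) * |k|) with hf
  set g : ℝ → ℝ := fun k => Real.exp (M * |k|) * ‖ghat k‖ with hg
  have hgmeas : Measurable g :=
    (Real.measurable_exp.comp (measurable_abs.const_mul M)).mul hmeas.norm
  have hfmem : MemLp f 2 (volume : Measure ℝ) := by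
    have hc : Continuous f := Real.continuous_exp.comp (continuous_const.mul continuous_abs)
    rw [memLp_two_iff_integrable_sq hc.aestronglyMeasurable]
    apply (my_integrable_exp_neg_abs (2 * (M - m)) (by linarith)).congr
    filter_upwards with x
    rw [hf]
    rw [show (-(2 * (M - m)) * |x|) = (2:ℕ) * ((m - M) * |x|) by push_cast; ring,
      Real.exp_nat_mul]
  have hgmem : MemLp g 2 (volume : Measure ℝ) := by
    rw [memLp_two_iff_integrable_sq hgmeas.aestronglyMeasurable]
    constructor
    · exact (hgmeas.pow_const 2).aestronglyMeasurable
    · rw [hasFiniteIntegral_iff_norm]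
      calc ∫⁻ k, ENNReal.ofReal ‖g k ^ 2‖
          = ∫⁻ k : ℝ, ENNReal.ofReal (Real.exp (2 * M * |k|) * ‖ghat k‖ ^ 2) := by
            congr 1; funext k
            congr 1
            rw [Real.norm_of_nonneg (by positivity), hg]
            rw [mul_pow, show (2 * M * |k|) = (2:ℕ) * (M * |k|) by push_cast; ring,
              Real.exp_nat_mul]
        _ < ⊤ := hint
  have hmul : MemLp (g • f) 1 (volume : Measure ℝ) := by
    apply MemLp.smul (𝕜 := ℝ) hfmem hgmem
  rw [memLp_one_iff_integrable] at hmul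
  apply hmul.congr
  filter_upwards with k
  show g k * f k = _
  rw [hf, hg, mul_right_comm, ← Real.exp_add]
  congr 2
  ring

lemma my_kernel_norm (ζ : ℂ) (k : ℝ) :
    ‖Complex.exp ((k:ℂ) * ζ * Complex.I) * ghat k‖
      = Real.exp (-(k * ζ.im)) * ‖ghat k‖ := by
  rw [norm_mul, Complex.norm_exp]
  congr 2
  simp [Complex.mul_re]

variable (hmeas : Measurable ghat)
    (hint : (∫⁻ k : ℝ,
        ENNReal.ofReal (Real.exp (2 * M * |k|) * ‖ghat k‖ ^ 2)) < ⊤)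

include hmeas hint in
lemma my_kernel_integrable (ζ : ℂ) (hζ : |ζ.im| < M) :
    Integrable (fun k : ℝ => Complex.exp ((k:ℂ) * ζ * Complex.I) * ghat k) := by
  apply (my_aux_integrable M ghat hmeas hint |ζ.im| hζ).mono'
  · exact ((Complex.continuous_exp.comp (by continuity)).aestronglyMeasurable.mul
      hmeas.aestronglyMeasurable)
  · filter_upwards with k
    rw [my_kernel_norm]
    gcongr
    calc -(k * ζ.im) ≤ |k * ζ.im| := neg_le_abs _
      _ = |ζ.im| * |k| := by rw [abs_mul]; ring

include hmeas hint in
lemma my_G_diffAt (ζ₀ : ℂ) (hζ₀ : |ζ₀.im| < M) :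
    DifferentiableAt ℂ (fun ζ => ∫ k : ℝ, Complex.exp ((k:ℂ) * ζ * Complex.I) * ghat k) ζ₀ := by
  set ε : ℝ := (M - |ζ₀.im|) / 4 with hε
  have hε0 : 0 < ε := by
    have := abs_nonneg ζ₀.im
    rw [hε]; linarith
  set F' : ℂ → ℝ → ℂ := fun ζ k =>
    Complex.exp ((k:ℂ) * ζ * Complex.I) * ((k:ℂ) * Complex.I) * ghat k with hF'
  set bound : ℝ → ℝ := fun k =>
    (1/ε) * (Real.exp ((|ζ₀.im| + 2*ε) * |k|) * ‖ghat k‖) with hbound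
  have key := hasDerivAt_integral_of_dominated_loc_of_deriv_le (𝕜 := ℂ)
    (F := fun ζ k => Complex.exp ((k:ℂ) * ζ * Complex.I) * ghat k)
    (F' := F') (x₀ := ζ₀) (bound := bound) (s := Metric.ball ζ₀ ε) (Metric.ball_mem_nhds ζ₀ hε0)
    ?_ (my_kernel_integrable M ghat hmeas hint ζ₀ hζ₀) ?_ ?_ ?_ ?_
  · exact key.2.differentiableAt
  · filter_upwards with ζ
    exact ((Complex.continuous_exp.comp (by continuity)).aestronglyMeasurable.mul
      hmeas.aestronglyMeasurable)
  · exact (((Complex.continuous_exp.comp (by continuity)).mul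
      (by continuity)).aestronglyMeasurable.mul hmeas.aestronglyMeasurable)
  · filter_upwards with k ζ hζ
    have him : |ζ.im| ≤ |ζ₀.im| + ε := by
      have h1 : |ζ.im - ζ₀.im| ≤ ‖ζ - ζ₀‖ := by
        simpa using Complex.abs_im_le_norm (ζ - ζ₀)
      have h2 : ‖ζ - ζ₀‖ < ε := by
        rw [← Complex.dist_eq]; exact Metric.mem_ball.mp hζ
      calc |ζ.im| ≤ |ζ₀.im| + |ζ.im - ζ₀.im| := by
            have := abs_sub_abs_le_abs_sub ζ.im ζ₀.im; linarith [abs_sub_comm ζ.im ζ₀.im]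
        _ ≤ |ζ₀.im| + ε := by linarith
    have hknorm : ‖F' ζ k‖
        = Real.exp (-(k * ζ.im)) * |k| * ‖ghat k‖ := by
      rw [hF']
      simp only [norm_mul, Complex.norm_exp]
      simp [Complex.mul_re]
    rw [hknorm, hbound]
    have e1 : Real.exp (-(k * ζ.im)) ≤ Real.exp ((|ζ₀.im| + ε) * |k|) := by
      apply Real.exp_le_exp.mpr
      calc -(k * ζ.im) ≤ |k * ζ.im| := neg_le_abs _
        _ = |ζ.im| * |k| := by rw [abs_mul]; ring
        _ ≤ (|ζ₀.im| + ε) * |k| := by gcongr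
    have e2 : |k| ≤ (1/ε) * Real.exp (ε * |k|) := by
      have h3 : ε * |k| ≤ Real.exp (ε * |k|) := by
        have h4 := Real.add_one_le_exp (ε * |k|)
        linarith
      calc |k| = (1/ε) * (ε * |k|) := by field_simp
        _ ≤ (1/ε) * Real.exp (ε * |k|) := by gcongr
    calc Real.exp (-(k * ζ.im)) * |k| * ‖ghat k‖
        ≤ Real.exp ((|ζ₀.im| + ε) * |k|) * ((1/ε) * Real.exp (ε * |k|)) * ‖ghat k‖ := by
          gcongr
      _ = (1/ε) * (Real.exp ((|ζ₀.im| + 2*ε) * |k|) * ‖ghat k‖) := by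
          rw [show (|ζ₀.im| + 2*ε) * |k| = (|ζ₀.im| + ε) * |k| + ε * |k| by ring,
            Real.exp_add]
          ring
  · exact ((my_aux_integrable M ghat hmeas hint (|ζ₀.im| + 2*ε) (by rw [hε]; linarith)).const_mul
      (1/ε))
  · filter_upwards with k ζ hζ
    have h1 : HasDerivAt (fun ζ' : ℂ => (k:ℂ) * ζ' * Complex.I) ((k:ℂ) * Complex.I) ζ := by
      simpa using ((hasDerivAt_id ζ).const_mul (k:ℂ)).mul_const Complex.I
    exact (h1.cexp.mul_const (ghat k))

end Aux

section Harmonic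

noncomputable def Lmap (ε : ℝ) : (ℝ × ℝ) →L[ℝ] ℂ :=
  Complex.ofRealCLM.comp (ContinuousLinearMap.fst ℝ ℝ ℝ)
    + ((ε : ℂ) * Complex.I) • (Complex.ofRealCLM.comp (ContinuousLinearMap.snd ℝ ℝ ℝ))

lemma Lmap_apply (ε : ℝ) (v : ℝ × ℝ) :
    Lmap ε v = (v.1 : ℂ) + (ε : ℂ) * Complex.I * (v.2 : ℂ) := by
  simp [Lmap]

noncomputable def Amap (ε c : ℝ) : ℝ × ℝ → ℂ :=
  fun q => Lmap ε q + (ε : ℂ) * (c : ℂ) * Complex.I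

lemma Amap_hasFDerivAt (ε c : ℝ) (q : ℝ × ℝ) : HasFDerivAt (Amap ε c) (Lmap ε) q :=
  (Lmap ε).hasFDerivAt.add_const _

lemma Amap_im (ε c : ℝ) (q : ℝ × ℝ) : (Amap ε c q).im = ε * (q.2 + c) := by
  simp [Amap, Lmap_apply]
  ring

lemma comp_hasFDerivAt (ε c : ℝ) (φ : ℂ → ℂ) (p : ℝ × ℝ)
    (hφ : DifferentiableAt ℂ φ (Amap ε c p)) :
    HasFDerivAt (fun q => φ (Amap ε c q))
      ((((1 : ℂ →L[ℂ] ℂ).smulRight (deriv φ (Amap ε c p))).restrictScalars ℝ).comp (Lmap ε)) p :=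
  (hφ.hasDerivAt.hasFDerivAt.restrictScalars ℝ).comp p (Amap_hasFDerivAt ε c p)

lemma master (G : ℂ → ℂ) (S : Set ℂ) (hS : IsOpen S) (hG : DifferentiableOn ℂ G S)
    (c : ℝ) (a b : ℂ) (Ω : Set (ℝ × ℝ)) (hΩo : IsOpen Ω)
    (hmem₁ : ∀ q ∈ Ω, Amap 1 c q ∈ S) (hmem₂ : ∀ q ∈ Ω, Amap (-1) c q ∈ S)
    (f : ℝ × ℝ → ℂ)
    (hfeq : ∀ q ∈ Ω, f q = a * G (Amap 1 c q) + b * G (Amap (-1) c q)) :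
    ContDiffOn ℝ (⊤ : ℕ∞) f Ω ∧
    ∀ p ∈ Ω, fderiv ℝ (fun q => fderiv ℝ f q (1, 0)) p (1, 0)
      + fderiv ℝ (fun q => fderiv ℝ f q (0, 1)) p (0, 1) = 0 := by
  have hGa : AnalyticOnNhd ℂ G S := hG.analyticOnNhd hS
  have hG' : AnalyticOnNhd ℂ (deriv G) S := hGa.deriv
  have hA_an : ∀ ε : ℝ, AnalyticOnNhd ℝ (Amap ε c) Ω := by
    intro ε
    exact fun q _ => ((Lmap ε).analyticAt q).add analyticAt_const
  constructor
  · have hnice : AnalyticOnNhd ℝ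
        (fun q => a * G (Amap 1 c q) + b * G (Amap (-1) c q)) Ω := by
      apply AnalyticOnNhd.add
      · exact analyticOnNhd_const.mul
          ((hGa.restrictScalars.comp (hA_an 1)) (fun q hq => hmem₁ q hq))
      · exact analyticOnNhd_const.mul
          ((hGa.restrictScalars.comp (hA_an (-1))) (fun q hq => hmem₂ q hq))
    exact (hnice.contDiffOn hΩo.uniqueDiffOn).congr hfeq
  · intro p hp
    have hDf : ∀ q ∈ Ω, HasFDerivAt f
        (a • ((((1 : ℂ →L[ℂ] ℂ).smulRight (deriv G (Amap 1 c q))).restrictScalars ℝ).comp (Lmap 1))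
        + b • ((((1 : ℂ →L[ℂ] ℂ).smulRight (deriv G (Amap (-1) c q))).restrictScalars ℝ).comp
            (Lmap (-1)))) q := by
      intro q hq
      have h1 := (comp_hasFDerivAt 1 c G q ((hGa (Amap 1 c q) (hmem₁ q hq)).differentiableAt)
        ).const_mul a
      have h2 := (comp_hasFDerivAt (-1) c G q ((hGa (Amap (-1) c q) (hmem₂ q hq)).differentiableAt)
        ).const_mul b
      apply (h1.add h2).congr_of_eventuallyEq
      filter_upwards [hΩo.mem_nhds hq] with r hr using hfeq r hr
    have hev : ∀ v : ℝ × ℝ, (fun q => fderiv ℝ f q v) =ᶠ[nhds p]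
        (fun q => (a * Lmap 1 v) * deriv G (Amap 1 c q)
          + (b * Lmap (-1) v) * deriv G (Amap (-1) c q)) := by
      intro v
      filter_upwards [hΩo.mem_nhds hp] with q hq
      rw [(hDf q hq).fderiv]
      simp [ContinuousLinearMap.smulRight_apply, smul_eq_mul]
      ring
    have hsecond : ∀ v w : ℝ × ℝ,
        fderiv ℝ (fun q => fderiv ℝ f q v) p w
        = (a * Lmap 1 v) * (Lmap 1 w * deriv (deriv G) (Amap 1 c p))
          + (b * Lmap (-1) v) * (Lmap (-1) w * deriv (deriv G) (Amap (-1) c p)) := by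
      intro v w
      rw [(hev v).fderiv_eq]
      have h1 := (comp_hasFDerivAt 1 c (deriv G) p
        ((hG' (Amap 1 c p) (hmem₁ p hp)).differentiableAt)).const_mul (a * Lmap 1 v)
      have h2 := (comp_hasFDerivAt (-1) c (deriv G) p
        ((hG' (Amap (-1) c p) (hmem₂ p hp)).differentiableAt)).const_mul (b * Lmap (-1) v)
      have h3 : HasFDerivAt (fun q => a * Lmap 1 v * deriv G (Amap 1 c q)
          + b * Lmap (-1) v * deriv G (Amap (-1) c q)) _ p := h1.add h2
      rw [h3.fderiv]
      simp [ContinuousLinearMap.smulRight_apply, smul_eq_mul]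
    rw [hsecond (1,0) (1,0), hsecond (0,1) (0,1)]
    have e1 : Lmap 1 ((1:ℝ),(0:ℝ)) = 1 := by rw [Lmap_apply]; simp
    have e2 : Lmap (-1) ((1:ℝ),(0:ℝ)) = 1 := by rw [Lmap_apply]; simp
    have e3 : Lmap 1 ((0:ℝ),(1:ℝ)) = Complex.I := by rw [Lmap_apply]; simp
    have e4 : Lmap (-1) ((0:ℝ),(1:ℝ)) = -Complex.I := by rw [Lmap_apply]; simp
    rw [e1, e2, e3, e4]
    linear_combination (a * deriv (deriv G) (Amap 1 c p)
      + b * deriv (deriv G) (Amap (-1) c p)) * Complex.I_sq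

end Harmonic

lemma my_cosh_le_exp_abs (t : ℝ) : Real.cosh t ≤ Real.exp |t| := by
  rw [Real.cosh_eq]
  have h1 := Real.exp_le_exp.mpr (le_abs_self t)
  have h2 := Real.exp_le_exp.mpr (neg_le_abs t)
  linarith

lemma my_abs_sinh_le_exp_abs (t : ℝ) : |Real.sinh t| ≤ Real.exp |t| := by
  rw [Real.sinh_eq]
  have h1 := Real.exp_le_exp.mpr (le_abs_self t)
  have h2 := Real.exp_le_exp.mpr (neg_le_abs t)
  have h3 := Real.exp_pos t
  have h4 := Real.exp_pos (-t)
  rw [abs_le]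
  constructor <;> [linarith [abs_nonneg t]; linarith]

/-- The reconstructed velocity fields
`F₁(x,z) = (1/2π)∫ e^{ikx} cosh(k(z+h)) ĝ(k) dk` and
`F₂(x,z) = (-i/2π)∫ e^{ikx} sinh(k(z+h)) ĝ(k) dk` are well defined, smooth, and harmonic
on the strip `|z+h| < M`, provided `∫ e^{2M|k|}|ĝ(k)|² dk < ∞`. -/
theorem reconstructed_fields_harmonic
    (h M : ℝ) (hh : 0 < h) (hM : 0 < M)
    (ghat : ℝ → ℂ) (hmeas : Measurable ghat)
    (hint : (∫⁻ k : ℝ,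
        ENNReal.ofReal (Real.exp (2 * M * |k|) * ‖ghat k‖ ^ 2)) < ⊤)
    (Ω : Set (ℝ × ℝ)) (hΩ : Ω = {p : ℝ × ℝ | |p.2 + h| < M})
    (F₁ F₂ : ℝ × ℝ → ℂ)
    (hF₁ : F₁ = fun p => (1 / (2 * Real.pi) : ℂ) *
      ∫ k : ℝ, Complex.exp (k * p.1 * Complex.I) *
        (Real.cosh (k * (p.2 + h)) : ℂ) * ghat k)
    (hF₂ : F₂ = fun p => (-Complex.I / (2 * Real.pi)) *
      ∫ k : ℝ, Complex.exp (k * p.1 * Complex.I) *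
        (Real.sinh (k * (p.2 + h)) : ℂ) * ghat k) :
    (∀ p ∈ Ω, Integrable (fun k : ℝ => Complex.exp (k * p.1 * Complex.I) *
        (Real.cosh (k * (p.2 + h)) : ℂ) * ghat k)) ∧
    (∀ p ∈ Ω, Integrable (fun k : ℝ => Complex.exp (k * p.1 * Complex.I) *
        (Real.sinh (k * (p.2 + h)) : ℂ) * ghat k)) ∧
    ContDiffOn ℝ (⊤ : ℕ∞) F₁ Ω ∧ ContDiffOn ℝ (⊤ : ℕ∞) F₂ Ω ∧
    (∀ p ∈ Ω,
      fderiv ℝ (fun q => fderiv ℝ F₁ q (1, 0)) p (1, 0)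
        + fderiv ℝ (fun q => fderiv ℝ F₁ q (0, 1)) p (0, 1) = 0) ∧
    (∀ p ∈ Ω,
      fderiv ℝ (fun q => fderiv ℝ F₂ q (1, 0)) p (1, 0)
        + fderiv ℝ (fun q => fderiv ℝ F₂ q (0, 1)) p (0, 1) = 0) := by
  -- the strip in `ℂ` and the boundary transform `G`
  set S : Set ℂ := {ζ : ℂ | |ζ.im| < M} with hS
  have hSopen : IsOpen S := by
    have : S = (fun ζ : ℂ => |ζ.im|) ⁻¹' (Set.Iio M) := rfl
    rw [this]
    exact isOpen_Iio.preimage (_root_.continuous_abs.comp Complex.continuous_im)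
  set G : ℂ → ℂ := fun ζ => ∫ k : ℝ, Complex.exp ((k:ℂ) * ζ * Complex.I) * ghat k with hG
  have hGdiff : DifferentiableOn ℂ G S := fun ζ hζ =>
    (my_G_diffAt M ghat hmeas hint ζ hζ).differentiableWithinAt
  have hΩopen : IsOpen Ω := by
    rw [hΩ]
    have : {p : ℝ × ℝ | |p.2 + h| < M}
        = (fun p : ℝ × ℝ => |p.2 + h|) ⁻¹' (Set.Iio M) := rfl
    rw [this]
    exact isOpen_Iio.preimage ((continuous_snd.add continuous_const).abs)
  have hmem₁ : ∀ q ∈ Ω, Amap 1 h q ∈ S := by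
    intro q hq
    rw [hΩ] at hq
    show |(Amap 1 h q).im| < M
    rw [Amap_im, one_mul]
    exact hq
  have hmem₂ : ∀ q ∈ Ω, Amap (-1) h q ∈ S := by
    intro q hq
    rw [hΩ] at hq
    show |(Amap (-1) h q).im| < M
    rw [Amap_im, show (-1:ℝ) * (q.2 + h) = -(q.2 + h) by ring, abs_neg]
    exact hq
  have hmemim : ∀ q ∈ Ω, |q.2 + h| < M := by
    intro q hq; rw [hΩ] at hq; exact hq
  -- kernel integrability at the two shifted arguments
  have hker₁ : ∀ q ∈ Ω, Integrable
      (fun k : ℝ => Complex.exp ((k:ℂ) * (Amap 1 h q) * Complex.I) * ghat k) := by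
    intro q hq
    apply my_kernel_integrable M ghat hmeas hint
    rw [Amap_im, one_mul]; exact hmemim q hq
  have hker₂ : ∀ q ∈ Ω, Integrable
      (fun k : ℝ => Complex.exp ((k:ℂ) * (Amap (-1) h q) * Complex.I) * ghat k) := by
    intro q hq
    apply my_kernel_integrable M ghat hmeas hint
    rw [Amap_im, show (-1:ℝ) * (q.2 + h) = -(q.2 + h) by ring, abs_neg]
    exact hmemim q hq
  -- the pointwise algebraic identities for the integrands
  have hAval : ∀ (ε : ℝ) (q : ℝ × ℝ),
      Amap ε h q = (q.1 : ℂ) + (ε : ℂ) * Complex.I * (q.2 : ℂ)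
        + (ε : ℂ) * (h : ℂ) * Complex.I := by
    intro ε q
    rw [Amap, Lmap_apply]
  have hexp₁ : ∀ (q : ℝ × ℝ) (k : ℝ),
      Complex.exp ((k:ℂ) * (Amap 1 h q) * Complex.I)
        = Complex.exp ((k:ℂ) * (q.1:ℂ) * Complex.I) * Complex.exp (-((k:ℂ) * ((q.2:ℂ) + (h:ℂ)))) := by
    intro q k
    rw [← Complex.exp_add, hAval]
    congr 1
    push_cast
    linear_combination ((k:ℂ) * ((q.2:ℂ) + (h:ℂ))) * Complex.I_sq
  have hexp₂ : ∀ (q : ℝ × ℝ) (k : ℝ),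
      Complex.exp ((k:ℂ) * (Amap (-1) h q) * Complex.I)
        = Complex.exp ((k:ℂ) * (q.1:ℂ) * Complex.I) * Complex.exp ((k:ℂ) * ((q.2:ℂ) + (h:ℂ))) := by
    intro q k
    rw [← Complex.exp_add, hAval]
    congr 1
    push_cast
    linear_combination (-(k:ℂ) * ((q.2:ℂ) + (h:ℂ))) * Complex.I_sq
  have hid_cosh : ∀ (q : ℝ × ℝ) (k : ℝ),
      Complex.exp ((k:ℂ) * (q.1:ℂ) * Complex.I) * (Real.cosh (k * (q.2 + h)) : ℂ) * ghat k
        = (1/2 : ℂ) * (Complex.exp ((k:ℂ) * (Amap 1 h q) * Complex.I) * ghat k)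
          + (1/2 : ℂ) * (Complex.exp ((k:ℂ) * (Amap (-1) h q) * Complex.I) * ghat k) := by
    intro q k
    rw [hexp₁, hexp₂, Real.cosh_eq]
    push_cast
    ring
  have hid_sinh : ∀ (q : ℝ × ℝ) (k : ℝ),
      Complex.exp ((k:ℂ) * (q.1:ℂ) * Complex.I) * (Real.sinh (k * (q.2 + h)) : ℂ) * ghat k
        = (-(1/2) : ℂ) * (Complex.exp ((k:ℂ) * (Amap 1 h q) * Complex.I) * ghat k)
          + (1/2 : ℂ) * (Complex.exp ((k:ℂ) * (Amap (-1) h q) * Complex.I) * ghat k) := by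
    intro q k
    rw [hexp₁, hexp₂, Real.sinh_eq]
    push_cast
    ring
  -- integrability of the stated integrands
  have hint_cosh : ∀ p ∈ Ω, Integrable (fun k : ℝ => Complex.exp (k * p.1 * Complex.I) *
      (Real.cosh (k * (p.2 + h)) : ℂ) * ghat k) := by
    intro p hp
    have := ((hker₁ p hp).const_mul (1/2 : ℂ)).add ((hker₂ p hp).const_mul (1/2 : ℂ))
    apply this.congr
    filter_upwards with k
    exact (hid_cosh p k).symm
  have hint_sinh : ∀ p ∈ Ω, Integrable (fun k : ℝ => Complex.exp (k * p.1 * Complex.I) *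
      (Real.sinh (k * (p.2 + h)) : ℂ) * ghat k) := by
    intro p hp
    have := ((hker₁ p hp).const_mul (-(1/2) : ℂ)).add ((hker₂ p hp).const_mul (1/2 : ℂ))
    apply this.congr
    filter_upwards with k
    exact (hid_sinh p k).symm
  -- expressions of F₁ and F₂ through G
  have hfeq₁ : ∀ q ∈ Ω, F₁ q
      = ((1 / (2 * Real.pi) : ℂ) * (1/2)) * G (Amap 1 h q)
        + ((1 / (2 * Real.pi) : ℂ) * (1/2)) * G (Amap (-1) h q) := by
    intro q hq
    rw [hF₁]
    simp only
    have : (∫ k : ℝ, Complex.exp (k * q.1 * Complex.I) *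
        (Real.cosh (k * (q.2 + h)) : ℂ) * ghat k)
        = ∫ k : ℝ, ((1/2 : ℂ) * (Complex.exp ((k:ℂ) * (Amap 1 h q) * Complex.I) * ghat k)
          + (1/2 : ℂ) * (Complex.exp ((k:ℂ) * (Amap (-1) h q) * Complex.I) * ghat k)) := by
      congr 1
      funext k
      exact hid_cosh q k
    rw [this, integral_add ((hker₁ q hq).const_mul _) ((hker₂ q hq).const_mul _),
      integral_const_mul, integral_const_mul]
    rw [hG]
    ring
  have hfeq₂ : ∀ q ∈ Ω, F₂ q
      = ((-Complex.I / (2 * Real.pi)) * (-(1/2))) * G (Amap 1 h q)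
        + ((-Complex.I / (2 * Real.pi)) * (1/2)) * G (Amap (-1) h q) := by
    intro q hq
    rw [hF₂]
    simp only
    have : (∫ k : ℝ, Complex.exp (k * q.1 * Complex.I) *
        (Real.sinh (k * (q.2 + h)) : ℂ) * ghat k)
        = ∫ k : ℝ, ((-(1/2) : ℂ) * (Complex.exp ((k:ℂ) * (Amap 1 h q) * Complex.I) * ghat k)
          + (1/2 : ℂ) * (Complex.exp ((k:ℂ) * (Amap (-1) h q) * Complex.I) * ghat k)) := by
      congr 1
      funext k
      exact hid_sinh q k
    rw [this, integral_add ((hker₁ q hq).const_mul _) ((hker₂ q hq).const_mul _),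
      integral_const_mul, integral_const_mul]
    rw [hG]
    ring
  have m₁ := master G S hSopen hGdiff h _ _ Ω hΩopen hmem₁ hmem₂ F₁ hfeq₁
  have m₂ := master G S hSopen hGdiff h _ _ Ω hΩopen hmem₁ hmem₂ F₂ hfeq₂
  exact ⟨hint_cosh, hint_sinh, m₁.1, m₂.1, m₁.2, m₂.2⟩
end
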